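/- Let 0 < α < 1, M ∈ ℕ, and n > 2^M. There exists a constant c_α depending only on α such that for all integers 0 ≤ k < l ≤ M−1 and every x ∈ I_{l+1}(e_k + e_l), ∫_{I_M} |K_n^α(x+t)| dμ(t) ≤ c_α 2^{αl+k} / (n^α 2^M). -/

import Mathlib

open MeasureTheory Filter Finset
open scoped ENNReal NNReal

noncomputable section

/-- The dyadic group `G = ∏ Z₂`. -/
abbrev G : Type := ℕ → ZMod 2

instance : TopologicalSpace (ZMod 2) := ⊥
instance : DiscreteTopology (ZMod 2) := ⟨rfl⟩
instance : MeasurableSpace (ZMod 2) := ⊤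
instance : BorelSpace (ZMod 2) := ⟨borel_eq_top_of_discrete.symm⟩
instance : ContinuousAdd (ZMod 2) := ⟨continuous_of_discreteTopology⟩
instance : ContinuousNeg (ZMod 2) := ⟨continuous_of_discreteTopology⟩
instance : IsTopologicalAddGroup (ZMod 2) := ⟨⟩

/-- The normalized Haar measure `μ` on the dyadic group `G`. -/
def μG : Measure G := Measure.addHaarMeasure ⊤

/-- The Rademacher functions `r_k(x) = (-1)^{x_k}`. -/
def rad (k : ℕ) (x : G) : ℝ := (-1 : ℝ) ^ (x k).val

/-- The Walsh functions `w_n = ∏_k r_k^{n_k}`, where `n = ∑ n_k 2^k`. -/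
def walsh (n : ℕ) (x : G) : ℝ := ∏ k ∈ Finset.range n, rad k x ^ (Nat.testBit n k).toNat

/-- The Dirichlet kernels `D_n = ∑_{k=0}^{n-1} w_k`. -/
def dirichlet (n : ℕ) (x : G) : ℝ := ∑ k ∈ Finset.range n, walsh k x

/-- The Fejér kernels `K_n = (1/n) ∑_{k=1}^{n} D_k`. -/
def fejer (n : ℕ) (x : G) : ℝ := (n : ℝ)⁻¹ * ∑ k ∈ Finset.Icc 1 n, dirichlet k x

/-- The Cesàro numbers `A_n^α = ((α+1)⋯(α+n))/n!`. -/
def cesA (α : ℝ) (n : ℕ) : ℝ := (∏ i ∈ Finset.range n, (α + i + 1)) / n.factorial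

/-- The `(C,α)` kernels `K_n^α = (1/A_n^α) ∑_{k=1}^n A_{n-k}^{α-1} D_k`. -/
def cesKernel (α : ℝ) (n : ℕ) (x : G) : ℝ :=
  (cesA α n)⁻¹ * ∑ k ∈ Finset.Icc 1 n, cesA (α - 1) (n - k) * dirichlet k x

/-- Walsh–Fourier coefficients of an integrable function. -/
def walshCoeff (f : G → ℝ) (k : ℕ) : ℝ := ∫ x, f x * walsh k x ∂μG

/-- Partial sums `S_m f` of the Walsh–Fourier series. -/
def partialSum (f : G → ℝ) (m : ℕ) (x : G) : ℝ :=
  ∑ k ∈ Finset.range m, walshCoeff f k * walsh k x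

/-- The `(C,α)` means `σ_n^α f = (1/A_n^α) ∑_{k=1}^n A_{n-k}^{α-1} S_k f`. -/
def cesaroMean (α : ℝ) (f : G → ℝ) (n : ℕ) (x : G) : ℝ :=
  (cesA α n)⁻¹ * ∑ k ∈ Finset.Icc 1 n, cesA (α - 1) (n - k) * partialSum f k x

/-- The dyadic interval `I_n(x)`. -/
def dyadicI (n : ℕ) (x : G) : Set G := {y | ∀ i < n, y i = x i}

/-- `e_k ∈ G`: the element whose `k`-th coordinate is `1` and all others `0`. -/
def eG (k : ℕ) : G := fun i => if i = k then 1 else 0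

/-- The projection onto the first `n` coordinates. -/
def projG (n : ℕ) : G → (Fin n → ZMod 2) := fun x i => x i

/-- The dyadic filtration `ℱ_n`, generated by the dyadic intervals of length `n`. -/
def dyadicF : Filtration ℕ (inferInstance : MeasurableSpace G) where
  seq n := MeasurableSpace.comap (projG n) inferInstance
  mono' := by
    intro n m hnm
    have h : projG n = (fun (y : Fin m → ZMod 2) (i : Fin n) => y (Fin.castLE hnm i)) ∘ projG m :=
      rfl
    simp only []
    rw [h, ← MeasurableSpace.comap_comp]
    exact MeasurableSpace.comap_mono
      ((measurable_pi_lambda _ fun i => measurable_pi_apply _).comap_le)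
  le' := fun n => (measurable_pi_lambda _ fun i => measurable_pi_apply _).comap_le

/-- The Walsh–Fourier coefficients `F̂(k) = lim_n ∫ F_n w_k dμ` of a martingale. -/
def martCoeff (F : ℕ → G → ℝ) (k : ℕ) : ℝ :=
  limUnder atTop (fun n => ∫ x, F n x * walsh k x ∂μG)

/-- Partial sums `S_m F` of the Walsh–Fourier series of a martingale. -/
def martSum (F : ℕ → G → ℝ) (m : ℕ) (x : G) : ℝ :=
  ∑ k ∈ Finset.range m, martCoeff F k * walsh k x

/-- The `(C,α)` means of a martingale. -/
def martCesaro (α : ℝ) (F : ℕ → G → ℝ) (n : ℕ) (x : G) : ℝ :=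
  (cesA α n)⁻¹ * ∑ k ∈ Finset.Icc 1 n, cesA (α - 1) (n - k) * martSum F k x

/-- The `L_p(G)` quasi-norm `(∫ |f|^p dμ)^{1/p}`, valued in `ℝ≥0∞`. -/
def LpNormG (p : ℝ) (f : G → ℝ) : ℝ≥0∞ :=
  (∫⁻ x, ENNReal.ofReal |f x| ^ p ∂μG) ^ (1 / p)

/-- The Hardy space quasi-norm `‖F‖_{H_p} = ‖sup_n |F_n|‖_p` of a martingale. -/
def hardyNorm (p : ℝ) (F : ℕ → G → ℝ) : ℝ≥0∞ :=
  (∫⁻ x, (⨆ n, ENNReal.ofReal |F n x|) ^ p ∂μG) ^ (1 / p)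

/-- The Hardy quasi-norm of an integrable function, via its generated martingale `(E_n f)`. -/
def hardyFnNorm (p : ℝ) (f : G → ℝ) : ℝ≥0∞ :=
  hardyNorm p (fun n => μG[f | dyadicF n])

/-!
Fix `y ∈ I_{k+1}(e_k)` with `y_l = 1` and write `K_n^α(y) = (A_n^α)⁻¹ ∑_{m<n} A_{n-1-m}^α w_m(y)`.
Since `r_l(y) = -1`, we have `w_{2^l+m}(y) = -w_m(y)` whenever bit `l` of `m` is clear, so the
sum regroups into `∑ c_m w_m(y) [bit l of m = 0]`, where `c_m` is either
`A_{n-1-m}^α - A_{n-1-m-2^l}^α` (monotone in `m` by concavity of `j ↦ A_j^α`) or one of the last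
`2^l` coefficients; all of them are at most `A_{2^l}^α ≤ 2 · 2^{αl}`. The partial sums of
`w_m(y) [bit l of m = 0]` are the averages of `D_R(y)` and `D_R(y + e_l)`, hence at most `2^k`
because `|D_R| ≤ 2^k` on `I_k \ I_{k+1}`. Abel summation then gives
`|K_n^α(y)| ≤ 16 · 2^{k+αl} / n^α` pointwise, and `μ(I_M) = 2^{-M}`.
-/

theorem Nat.two_pow_mul_add_eq_xor {s u : ℕ} (hu : u < 2 ^ s) (v : ℕ) :
    2 ^ s * v + u = 2 ^ s * v ^^^ u := by
  apply Nat.eq_of_testBit_eq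
  intro j
  rw [Nat.testBit_two_pow_mul_add _ hu, Nat.testBit_xor, Nat.testBit_two_pow_mul]
  split_ifs with h
  · simp [show ¬ s ≤ j by omega]
  · simp [show s ≤ j by omega,
      Nat.testBit_lt_two_pow (hu.trans_le (Nat.pow_le_pow_right two_pos (not_lt.1 h)))]

theorem Nat.two_pow_add_eq_xor {l m : ℕ} (h : m.testBit l = false) : 2 ^ l + m = 2 ^ l ^^^ m := by
  have hr : m % 2 ^ (l + 1) < 2 ^ l := by
    by_contra hr
    have := Nat.testBit_of_two_pow_le_and_two_pow_add_one_gt (not_lt.1 hr)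
      (Nat.mod_lt _ (Nat.two_pow_pos _))
    simp [Nat.testBit_mod_two_pow, h] at this
  have hm := Nat.div_add_mod m (2 ^ (l + 1))
  have hl : 2 ^ l + m % 2 ^ (l + 1) < 2 ^ (l + 1) := by have := pow_succ 2 l; omega
  rw [← hm, ← add_assoc, add_comm (2 ^ l), add_assoc, Nat.two_pow_mul_add_eq_xor hl,
    ← mul_one (2 ^ l), Nat.two_pow_mul_add_eq_xor hr,
    Nat.two_pow_mul_add_eq_xor (Nat.mod_lt _ (Nat.two_pow_pos _)),
    mul_one, ← Nat.xor_assoc, ← Nat.xor_assoc, Nat.xor_comm (2 ^ l)]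

theorem rad_add (k : ℕ) (x y : G) : rad k (x + y) = rad k x * rad k y := by
  rw [rad, rad, rad, Pi.add_apply, ZMod.val_add, ← neg_one_pow_eq_pow_mod_two, pow_add]

theorem rad_mul_self (k : ℕ) (x : G) : rad k x * rad k x = 1 := by
  rw [rad, ← pow_add, ← two_mul, pow_mul]
  simp

theorem abs_rad (k : ℕ) (x : G) : |rad k x| = 1 := by
  simp [rad]

theorem rad_eG (k l : ℕ) : rad k (eG l) = if k = l then -1 else 1 := by
  by_cases h : k = l <;> simp [rad, eG, h, ZMod.val_one]

theorem walsh_eq_prod_range {n T : ℕ} (h : n < 2 ^ T) (y : G) :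
    walsh n y = ∏ i ∈ range T, rad i y ^ (n.testBit i).toNat := by
  have extra : ∀ i, n < 2 ^ i → rad i y ^ (n.testBit i).toNat = 1 := fun i hi => by
    simp [Nat.testBit_lt_two_pow hi]
  rcases le_total n T with hnT | hTn
  · refine prod_subset (range_subset_range.2 hnT) fun i _ hi => extra i ?_
    exact n.lt_two_pow_self.trans_le (Nat.pow_le_pow_right two_pos (by simpa using hi))
  · refine (prod_subset (range_subset_range.2 hTn) fun i _ hi => extra i ?_).symm
    exact h.trans_le (Nat.pow_le_pow_right two_pos (by simpa using hi))

theorem walsh_xor (a b : ℕ) (y : G) : walsh (a ^^^ b) y = walsh a y * walsh b y := by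
  have ha : a < 2 ^ (a + b) := a.lt_two_pow_self.trans_le (Nat.pow_le_pow_right two_pos (by omega))
  have hb : b < 2 ^ (a + b) := b.lt_two_pow_self.trans_le (Nat.pow_le_pow_right two_pos (by omega))
  rw [walsh_eq_prod_range (Nat.xor_lt_two_pow ha hb), walsh_eq_prod_range ha,
    walsh_eq_prod_range hb, ← prod_mul_distrib]
  refine prod_congr rfl fun i _ => ?_
  rw [Nat.testBit_xor]
  cases a.testBit i <;> cases b.testBit i <;> simp [rad_mul_self]

theorem walsh_add (n : ℕ) (x y : G) : walsh n (x + y) = walsh n x * walsh n y := by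
  simp only [walsh, rad_add, mul_pow, prod_mul_distrib]

theorem abs_walsh (n : ℕ) (y : G) : |walsh n y| = 1 := by
  simp [walsh, abs_prod, abs_rad]

theorem walsh_two_pow (s : ℕ) (y : G) : walsh (2 ^ s) y = rad s y := by
  rw [walsh_eq_prod_range (Nat.pow_lt_pow_right one_lt_two s.lt_succ_self),
    prod_eq_single_of_mem s (by simp) fun i _ hi => by simp [Ne.symm hi]]
  simp

theorem walsh_eG (n l : ℕ) : walsh n (eG l) = if n.testBit l then -1 else 1 := by
  have hn : n < 2 ^ (n + l + 1) :=
    n.lt_two_pow_self.trans_le (Nat.pow_le_pow_right two_pos (by omega))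
  rw [walsh_eq_prod_range hn, prod_eq_single_of_mem l (by simp)
    fun i _ hi => by simp [rad_eG, hi]]
  cases n.testBit l <;> simp [rad_eG]

theorem walsh_eq_one_of_mem_dyadicI {s n : ℕ} {y : G} (hy : y ∈ dyadicI s 0) (hn : n < 2 ^ s) :
    walsh n y = 1 := by
  rw [walsh_eq_prod_range hn]
  exact prod_eq_one fun i hi => by simp [rad, hy i (mem_range.1 hi)]

theorem dirichlet_two_pow_mul_add {s u : ℕ} (hu : u ≤ 2 ^ s) (v : ℕ) (y : G) :
    dirichlet (2 ^ s * v + u) y =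
      dirichlet (2 ^ s * v) y + walsh (2 ^ s * v) y * dirichlet u y := by
  rw [dirichlet, sum_range_add, dirichlet, dirichlet, mul_sum]
  congr 1
  refine sum_congr rfl fun i hi => ?_
  rw [Nat.two_pow_mul_add_eq_xor ((mem_range.1 hi).trans_le hu), walsh_xor]

theorem dirichlet_two_pow_succ (s : ℕ) (y : G) :
    dirichlet (2 ^ (s + 1)) y = (1 + rad s y) * dirichlet (2 ^ s) y := by
  rw [show 2 ^ (s + 1) = 2 ^ s * 1 + 2 ^ s by ring, dirichlet_two_pow_mul_add le_rfl, mul_one,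
    walsh_two_pow]
  ring

theorem dirichlet_two_pow_mul_eq_zero {s : ℕ} {y : G} (h : dirichlet (2 ^ s) y = 0) (v : ℕ) :
    dirichlet (2 ^ s * v) y = 0 := by
  induction v with
  | zero => simp [dirichlet]
  | succ v ih => rw [mul_add_one, dirichlet_two_pow_mul_add le_rfl, ih, h, mul_zero, add_zero]

theorem dirichlet_eq_of_mem_dyadicI {s u : ℕ} {y : G} (hy : y ∈ dyadicI s 0)
    (hu : u ≤ 2 ^ s) :
    dirichlet u y = u := by
  rw [dirichlet, sum_congr rfl fun i hi =>
    walsh_eq_one_of_mem_dyadicI hy ((mem_range.1 hi).trans_le hu)]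
  simp

theorem abs_dirichlet_le {k : ℕ} {y : G} (hy : y ∈ dyadicI (k + 1) (eG k)) (u : ℕ) :
    |dirichlet u y| ≤ 2 ^ k := by
  have hy0 : y ∈ dyadicI k 0 := fun i hi => by simp [hy i (by omega), eG, hi.ne]
  have hrad : rad k y = -1 := by simp [rad, hy k k.lt_succ_self, eG, ZMod.val_one]
  -- `D_{2^{k+1}}(y) = 0`, so `D_u(y) = ± D_r(y)` with `r = u mod 2^{k+1}`,
  -- and `D_r(y)` is `r` or `2^{k+1} - r`.
  have hD : dirichlet (2 ^ (k + 1)) y = 0 := by rw [dirichlet_two_pow_succ, hrad]; ring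
  have hr : u % 2 ^ (k + 1) < 2 ^ (k + 1) := Nat.mod_lt _ (Nat.two_pow_pos _)
  rw [← Nat.div_add_mod u (2 ^ (k + 1)), dirichlet_two_pow_mul_add hr.le,
    dirichlet_two_pow_mul_eq_zero hD, zero_add, abs_mul, abs_walsh, one_mul]
  generalize u % 2 ^ (k + 1) = r at hr
  rcases le_or_gt r (2 ^ k) with hrk | hrk
  · rw [dirichlet_eq_of_mem_dyadicI hy0 hrk, abs_of_nonneg (Nat.cast_nonneg _)]
    exact_mod_cast hrk
  · obtain ⟨r, rfl⟩ : ∃ r', r = 2 ^ k * 1 + r' := ⟨r - 2 ^ k, by omega⟩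
    have hr' : r ≤ 2 ^ k := by rw [pow_succ] at hr; omega
    rw [dirichlet_two_pow_mul_add hr', mul_one, walsh_two_pow, hrad,
      dirichlet_eq_of_mem_dyadicI hy0 le_rfl, dirichlet_eq_of_mem_dyadicI hy0 hr', abs_le]
    have : (r : ℝ) ≤ 2 ^ k := by exact_mod_cast hr'
    push_cast
    constructor <;> linarith [(Nat.cast_nonneg r : (0:ℝ) ≤ r)]

theorem cesA_zero (α : ℝ) : cesA α 0 = 1 := by simp [cesA]

theorem cesA_succ (α : ℝ) (n : ℕ) :
    cesA α (n + 1) = cesA α n * ((α + n + 1) / (n + 1)) := by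
  rw [cesA, cesA, prod_range_succ, Nat.factorial_succ]
  push_cast
  field_simp

theorem cesA_nonneg {α : ℝ} (hα : -1 ≤ α) (n : ℕ) : 0 ≤ cesA α n :=
  div_nonneg (prod_nonneg fun i _ => by linarith [i.cast_nonneg (α := ℝ)]) (Nat.cast_nonneg _)

theorem cesA_sub_one_succ (α : ℝ) (n : ℕ) :
    cesA (α - 1) (n + 1) = α / (n + 1) * cesA α n := by
  rw [cesA, cesA, prod_range_succ', Nat.factorial_succ]
  push_cast
  field_simp
  ring_nf

theorem cesA_succ_eq_add (α : ℝ) (n : ℕ) :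
    cesA α (n + 1) = cesA α n + cesA (α - 1) (n + 1) := by
  rw [cesA_succ, cesA_sub_one_succ]
  field_simp
  ring

theorem sum_range_cesA_sub_one (α : ℝ) (n : ℕ) :
    ∑ i ∈ range (n + 1), cesA (α - 1) i = cesA α n := by
  induction n with
  | zero => simp [cesA]
  | succ n ih => rw [sum_range_succ, ih, ← cesA_succ_eq_add]

theorem cesA_monotone {α : ℝ} (hα : 0 ≤ α) : Monotone (cesA α) :=
  monotone_nat_of_le_succ fun n => by
    rw [cesA_succ_eq_add, cesA_sub_one_succ]
    have := cesA_nonneg (by linarith : -1 ≤ α) n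
    have : 0 ≤ α / (n + 1) := by positivity
    nlinarith

theorem cesA_sub_one_antitone {α : ℝ} (hα0 : 0 ≤ α) (hα1 : α ≤ 1) :
    Antitone (cesA (α - 1)) :=
  antitone_nat_of_succ_le fun n => by
    rw [cesA_succ]
    refine mul_le_of_le_one_right (cesA_nonneg (by linarith) n) ?_
    rw [div_le_one (by positivity)]
    linarith

theorem cesA_add_sub_antitone {α : ℝ} (hα0 : 0 ≤ α) (hα1 : α ≤ 1) (L : ℕ) :
    Antitone fun q => cesA α (q + L) - cesA α q :=
  antitone_nat_of_succ_le fun q => by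
    rw [add_right_comm, cesA_succ_eq_add α (q + L), cesA_succ_eq_add α q]
    linarith [cesA_sub_one_antitone hα0 hα1 (by omega : q + 1 ≤ q + L + 1)]

theorem add_one_rpow_le_cesA {α : ℝ} (hα0 : 0 ≤ α) (hα1 : α ≤ 1) (n : ℕ) :
    ((n : ℝ) + 1) ^ α ≤ cesA α n := by
  induction n with
  | zero => simp [cesA]
  | succ n ih =>
    have hn : (0 : ℝ) < n + 1 := by positivity
    have hbern := rpow_one_add_le_one_add_mul_self (s := 1 / (n + 1))
      (by linarith [show (0 : ℝ) ≤ 1 / (n + 1) by positivity]) hα0 hα1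
    calc ((↑(n + 1) : ℝ) + 1) ^ α = ((n : ℝ) + 1) ^ α * (1 + 1 / (n + 1)) ^ α := by
          rw [← Real.mul_rpow hn.le (by positivity)]
          congr 1
          field_simp
          push_cast
          ring
      _ ≤ cesA α n * ((α + n + 1) / (n + 1)) := by
          refine mul_le_mul ih (hbern.trans_eq ?_) (by positivity) (cesA_nonneg (by linarith) n)
          field_simp
          ring
      _ = cesA α (n + 1) := (cesA_succ α n).symm

theorem cesA_le_two_mul_rpow {α : ℝ} (hα0 : 0 ≤ α) (hα1 : α ≤ 1) {n : ℕ} (hn : 1 ≤ n) :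
    cesA α n ≤ 2 * (n : ℝ) ^ α := by
  induction n, hn using Nat.le_induction with
  | base => simp [cesA]; linarith
  | succ n hn ih =>
    have hn' : (1 : ℝ) ≤ n := by exact_mod_cast hn
    have ht : 1 / ((n : ℝ) + 1) ≤ 1 := by rw [div_le_one (by positivity)]; linarith
    have hbern := rpow_one_add_le_one_add_mul_self (s := -(1 / (n + 1))) (by linarith) hα0 hα1
    have hsplit : (n : ℝ) ^ α = ((n : ℝ) + 1) ^ α * (1 + -(1 / (n + 1))) ^ α := by
      rw [← Real.mul_rpow (by positivity) (by linarith)]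
      congr 1
      field_simp
      ring
    have hratio : (α + n + 1) / (n + 1) = 1 + α * (1 / (n + 1)) := by field_simp; ring
    rw [cesA_succ, hratio, Nat.cast_add_one]
    calc cesA α n * (1 + α * (1 / (n + 1)))
        ≤ 2 * (((n : ℝ) + 1) ^ α * (1 + α * -(1 / (n + 1)))) * (1 + α * (1 / (n + 1))) := by
          rw [hsplit] at ih
          gcongr
          exact ih.trans (by gcongr)
      _ = 2 * ((n : ℝ) + 1) ^ α * (1 - (α * (1 / (n + 1))) ^ 2) := by ring
      _ ≤ 2 * ((n : ℝ) + 1) ^ α := by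
          have : 0 ≤ 2 * ((n : ℝ) + 1) ^ α := by positivity
          nlinarith [sq_nonneg (α * (1 / ((n : ℝ) + 1)))]

theorem abs_sum_Ico_mul_le_of_monotone {c g : ℕ → ℝ} {C : ℝ} (hc : Monotone c)
    (hg : ∀ R, |∑ i ∈ range R, g i| ≤ C) (a b : ℕ) :
    |∑ i ∈ Ico a b, c i * g i| ≤ 2 * (|c a| + |c (b - 1)|) * C := by
  have hC : 0 ≤ C := by simpa using hg 0
  rcases le_or_gt b a with hba | hab
  · rw [Ico_eq_empty_of_le hba, sum_empty, abs_zero]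
    positivity
  have hparts := sum_Ico_by_parts c g hab
  simp only [smul_eq_mul] at hparts
  have htv : ∑ i ∈ Ico a (b - 1), |c (i + 1) - c i| = c (b - 1) - c a := by
    rw [sum_congr rfl fun i _ => abs_of_nonneg (sub_nonneg.2 (hc i.le_succ)),
      sum_Ico_sub c (by omega)]
  have hvar : |∑ i ∈ Ico a (b - 1), (c (i + 1) - c i) * ∑ j ∈ range (i + 1), g j|
      ≤ (c (b - 1) - c a) * C := by
    rw [← htv, sum_mul]
    refine (abs_sum_le_sum_abs _ _).trans (sum_le_sum fun i _ => ?_)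
    rw [abs_mul]
    exact mul_le_mul_of_nonneg_left (hg _) (abs_nonneg _)
  rw [hparts]
  calc |c (b - 1) * ∑ i ∈ range b, g i - c a * ∑ i ∈ range a, g i -
        ∑ i ∈ Ico a (b - 1), (c (i + 1) - c i) * ∑ j ∈ range (i + 1), g j|
      ≤ |c (b - 1)| * C + |c a| * C + (c (b - 1) - c a) * C := by
        refine (abs_sub _ _).trans (add_le_add ((abs_sub _ _).trans (add_le_add ?_ ?_)) hvar) <;>
          rw [abs_mul] <;> exact mul_le_mul_of_nonneg_left (hg _) (abs_nonneg _)
    _ ≤ 2 * (|c a| + |c (b - 1)|) * C := by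
        have := neg_abs_le (c a)
        have := le_abs_self (c (b - 1))
        nlinarith

theorem abs_sum_Ico_mul_le_of_antitone {c g : ℕ → ℝ} {C : ℝ} (hc : Antitone c)
    (hg : ∀ R, |∑ i ∈ range R, g i| ≤ C) (a b : ℕ) :
    |∑ i ∈ Ico a b, c i * g i| ≤ 2 * (|c a| + |c (b - 1)|) * C := by
  simpa [neg_mul, sum_neg_distrib, abs_neg] using abs_sum_Ico_mul_le_of_monotone hc.neg hg a b

def walshBitClear (l : ℕ) (y : G) (m : ℕ) : ℝ := if m.testBit l then 0 else walsh m y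

theorem walshBitClear_eq (l : ℕ) (y : G) (m : ℕ) :
    walshBitClear l y m = (walsh m y + walsh m (y + eG l)) / 2 := by
  rw [walshBitClear, walsh_add, walsh_eG]
  split_ifs <;> ring

theorem abs_sum_walshBitClear_le {k l : ℕ} (hkl : k < l) {y : G}
    (hy : y ∈ dyadicI (k + 1) (eG k)) (R : ℕ) :
    |∑ m ∈ range R, walshBitClear l y m| ≤ 2 ^ k := by
  have hy' : y + eG l ∈ dyadicI (k + 1) (eG k) := fun i hi => by
    simp [hy i hi, eG, show i ≠ l by omega]
  simp only [walshBitClear_eq, ← sum_div, sum_add_distrib]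
  rw [← dirichlet, ← dirichlet, abs_div, abs_two]
  linarith [abs_add_le (dirichlet R y) (dirichlet R (y + eG l)), abs_dirichlet_le hy R,
    abs_dirichlet_le hy' R]

theorem sum_two_pow_add_mul_walsh_eq {l : ℕ} {y : G} (hyl : y l = 1) (B : ℕ → ℝ) (N : ℕ) :
    ∑ m ∈ range (2 ^ l + N), B m * walsh m y =
      ∑ m ∈ range N, (B m - B (2 ^ l + m)) * walshBitClear l y m +
        ∑ m ∈ Ico N (2 ^ l + N), B m * walshBitClear l y m := by
  have hlow : ∀ m ∈ range (2 ^ l), B m * walsh m y = B m * walshBitClear l y m := fun m hm => by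
    rw [walshBitClear, Nat.testBit_lt_two_pow (mem_range.1 hm), if_neg Bool.false_ne_true]
  have hhigh : ∀ m ∈ range N, B (2 ^ l + m) * walsh (2 ^ l + m) y =
      B (2 ^ l + m) * walshBitClear l y (2 ^ l + m) - B (2 ^ l + m) * walshBitClear l y m := by
    intro m _
    rw [← mul_sub]
    congr 1
    cases hm : m.testBit l
    · rw [Nat.two_pow_add_eq_xor hm, walsh_xor, walsh_two_pow, walshBitClear, walshBitClear,
        ← Nat.two_pow_add_eq_xor hm, Nat.testBit_two_pow_add_eq, hm]
      simp [rad, hyl, ZMod.val_one]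
    · simp [walshBitClear, Nat.testBit_two_pow_add_eq, hm]
  rw [sum_range_add, sum_congr rfl hlow, sum_congr rfl hhigh, sum_sub_distrib, ← add_sub_assoc,
    ← sum_range_add, ← sum_range_add_sum_Ico _ (Nat.le_add_left N _)]
  simp only [sub_mul, sum_sub_distrib]
  ring

theorem sum_Icc_mul_dirichlet (c : ℕ → ℝ) (n : ℕ) (y : G) :
    ∑ j ∈ Icc 1 n, c j * dirichlet j y =
      ∑ m ∈ range n, (∑ j ∈ Ioc m n, c j) * walsh m y := by
  simp only [dirichlet, mul_sum, sum_mul]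
  exact sum_comm' fun j m => by simp only [mem_Icc, mem_range, mem_Ioc]; omega

theorem sum_Ioc_cesA_sub_one {m n : ℕ} (α : ℝ) (hmn : m < n) :
    ∑ j ∈ Ioc m n, cesA (α - 1) (n - j) = cesA α (n - 1 - m) := by
  rw [← sum_range_cesA_sub_one]
  exact sum_nbij' (fun j => n - j) (fun i => n - i) (by simp; omega) (by simp; omega)
    (by simp; omega) (by simp; omega) (fun _ _ => rfl)

theorem cesKernel_eq_sum_walsh (α : ℝ) (n : ℕ) (y : G) :
    cesKernel α n y = (cesA α n)⁻¹ * ∑ m ∈ range n, cesA α (n - 1 - m) * walsh m y := by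
  rw [cesKernel, sum_Icc_mul_dirichlet]
  congr 1
  exact sum_congr rfl fun m hm => by rw [sum_Ioc_cesA_sub_one α (mem_range.1 hm)]

theorem abs_sum_cesA_mul_walsh_le {α : ℝ} (hα0 : 0 ≤ α) (hα1 : α ≤ 1) {k l n : ℕ}
    (hkl : k < l) (hn : 2 ^ l ≤ n) {y : G} (hy : y ∈ dyadicI (k + 1) (eG k)) (hyl : y l = 1) :
    |∑ m ∈ range n, cesA α (n - 1 - m) * walsh m y| ≤ 8 * 2 ^ k * cesA α (2 ^ l) := by
  obtain ⟨N, rfl⟩ : ∃ N, n = 2 ^ l + N := ⟨n - 2 ^ l, by omega⟩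
  have hL : 0 < 2 ^ l := Nat.two_pow_pos l
  have hg := abs_sum_walshBitClear_le hkl hy
  have hA := cesA_monotone hα0
  have hA_abs : ∀ {q}, q ≤ 2 ^ l → |cesA α q| ≤ cesA α (2 ^ l) := fun hq => by
    rw [abs_of_nonneg (cesA_nonneg (by linarith) _)]
    exact hA hq
  set ψ : ℕ → ℝ := fun q => cesA α (q + 2 ^ l) - cesA α q
  have hψ : Antitone ψ := cesA_add_sub_antitone hα0 hα1 _
  have hψ_abs : ∀ q, |ψ q| ≤ cesA α (2 ^ l) := fun q => by
    have h0 : ψ q ≤ ψ 0 := hψ (Nat.zero_le q)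
    have h1 : cesA α q ≤ cesA α (q + 2 ^ l) := hA (Nat.le_add_right q _)
    simp only [ψ, zero_add, cesA_zero] at h0 ⊢
    rw [abs_le]
    constructor <;> linarith
  have hlow : ∑ m ∈ range N,
      (cesA α (2 ^ l + N - 1 - m) - cesA α (2 ^ l + N - 1 - (2 ^ l + m))) * walshBitClear l y m =
        ∑ m ∈ Ico 0 N, ψ (N - 1 - m) * walshBitClear l y m := by
    rw [range_eq_Ico]
    refine sum_congr rfl fun m hm => ?_
    simp only [mem_Ico] at hm
    simp only [ψ]
    congr 3 <;> omega
  have hk : (0 : ℝ) ≤ 2 ^ k := by positivity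
  have hlow_le : |∑ m ∈ Ico 0 N, ψ (N - 1 - m) * walshBitClear l y m| ≤
      4 * 2 ^ k * cesA α (2 ^ l) :=
    calc _ ≤ 2 * (|ψ (N - 1 - 0)| + |ψ (N - 1 - (N - 1))|) * 2 ^ k :=
          abs_sum_Ico_mul_le_of_monotone (hψ.comp fun a b h => by omega) hg 0 N
      _ ≤ _ := by nlinarith [hψ_abs (N - 1 - 0), hψ_abs (N - 1 - (N - 1))]
  have hhigh_le :
      |∑ m ∈ Ico N (2 ^ l + N), cesA α (2 ^ l + N - 1 - m) * walshBitClear l y m| ≤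
        4 * 2 ^ k * cesA α (2 ^ l) :=
    calc _ ≤ 2 * (|cesA α (2 ^ l + N - 1 - N)| +
            |cesA α (2 ^ l + N - 1 - (2 ^ l + N - 1))|) * 2 ^ k :=
          abs_sum_Ico_mul_le_of_antitone (hA.comp_antitone fun a b h => by omega) hg N _
      _ ≤ _ := by nlinarith [hA_abs (q := 2 ^ l + N - 1 - N) (by omega),
            hA_abs (q := 2 ^ l + N - 1 - (2 ^ l + N - 1)) (by omega)]
  rw [sum_two_pow_add_mul_walsh_eq hyl, hlow]
  linarith [abs_add_le (∑ m ∈ Ico 0 N, ψ (N - 1 - m) * walshBitClear l y m)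
    (∑ m ∈ Ico N (2 ^ l + N), cesA α (2 ^ l + N - 1 - m) * walshBitClear l y m)]

theorem abs_cesKernel_le {α : ℝ} (hα0 : 0 ≤ α) (hα1 : α ≤ 1) {k l n : ℕ} (hkl : k < l)
    (hn : 2 ^ l ≤ n) {y : G} (hy : y ∈ dyadicI (k + 1) (eG k)) (hyl : y l = 1) :
    |cesKernel α n y| ≤ 16 * (2 : ℝ) ^ (α * l) * 2 ^ k / (n : ℝ) ^ α := by
  have hnα : 0 < (n : ℝ) ^ α :=
    Real.rpow_pos_of_pos (by exact_mod_cast (Nat.two_pow_pos l).trans_le hn) α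
  have hlower : (n : ℝ) ^ α ≤ cesA α n :=
    (Real.rpow_le_rpow (Nat.cast_nonneg n) (by linarith) hα0).trans
      (add_one_rpow_le_cesA hα0 hα1 n)
  have hupper : cesA α (2 ^ l) ≤ 2 * (2 : ℝ) ^ (α * l) := by
    refine (cesA_le_two_mul_rpow hα0 hα1 Nat.one_le_two_pow).trans_eq ?_
    rw [Nat.cast_pow, Nat.cast_ofNat, ← Real.rpow_natCast, ← Real.rpow_mul zero_le_two,
      mul_comm (l : ℝ)]
  have hA : 0 < cesA α n := hnα.trans_le hlower
  rw [cesKernel_eq_sum_walsh, abs_mul, abs_inv, abs_of_pos hA, inv_mul_le_iff₀ hA]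
  calc _ ≤ 8 * 2 ^ k * cesA α (2 ^ l) := abs_sum_cesA_mul_walsh_le hα0 hα1 hkl hn hy hyl
    _ ≤ 8 * 2 ^ k * (2 * (2 : ℝ) ^ (α * l)) := by gcongr
    _ ≤ _ := by
        rw [mul_div_assoc', le_div_iff₀ hnα]
        have : 0 ≤ 16 * (2 : ℝ) ^ (α * l) * 2 ^ k := by positivity
        nlinarith

instance : Measure.IsAddLeftInvariant μG := by
  unfold μG
  infer_instance

theorem μG_univ : μG Set.univ = 1 := by
  simpa [μG] using
    Measure.addHaarMeasure_self (K₀ := (⊤ : TopologicalSpace.PositiveCompacts G))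

theorem μG_dyadicI_zero (M : ℕ) : μG (dyadicI M 0) = (2 ^ M)⁻¹ := by
  let f : G →+ (Fin M → ZMod 2) := ⟨⟨projG M, rfl⟩, fun _ _ => rfl⟩
  have hf : ∀ y, f y = projG M y := fun _ => rfl
  have hker : (f.ker : Set G) = dyadicI M 0 := by
    ext y
    simp [hf, projG, dyadicI, funext_iff, Fin.forall_iff]
  have hsurj : Function.Surjective f := fun c =>
    ⟨fun i => if h : i < M then c ⟨i, h⟩ else 0, funext fun i => by simp [hf, projG]⟩
  have hidx : f.ker.index = 2 ^ M := by
    rw [AddSubgroup.index_ker, AddMonoidHom.range_eq_top.2 hsurj, AddSubgroup.card_top,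
      Nat.card_eq_fintype_card, Fintype.card_fun, ZMod.card, Fintype.card_fin]
  have : f.ker.FiniteIndex := ⟨by rw [hidx]; positivity⟩
  have hmeas : MeasurableSet (f.ker : Set G) :=
    (measurable_pi_lambda (projG M) fun i => measurable_pi_apply _) (measurableSet_singleton 0)
  have h := AddSubgroup.index_mul_measure f.ker hmeas μG
  rw [hidx, hker, μG_univ] at h
  push_cast at h
  exact ENNReal.eq_inv_of_mul_eq_one_left (by rwa [mul_comm])

/-- `∫_{I_M} |K_n^α(x+t)| dμ(t) ≤ c_α 2^{αl+k} / (n^α 2^M)` for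
`x ∈ I_{l+1}(e_k + e_l)`, `0 ≤ k < l ≤ M-1`, `n > 2^M`. -/
theorem statement4 (α : ℝ) (hα0 : 0 < α) (hα1 : α < 1) :
    ∃ c : ℝ, 0 < c ∧ ∀ M : ℕ, ∀ n : ℕ, 2 ^ M < n → ∀ k l : ℕ, k < l → l < M →
      ∀ x ∈ dyadicI (l + 1) (eG k + eG l),
        (∫ t in dyadicI M 0, |cesKernel α n (x + t)| ∂μG) ≤
          c * (2 : ℝ) ^ (α * (l : ℝ)) * 2 ^ k / ((n : ℝ) ^ α * 2 ^ M) := by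
  refine ⟨16, by norm_num, fun M n hn k l hkl hlM x hx => ?_⟩
  have hbound : ∀ t ∈ dyadicI M 0,
      ‖|cesKernel α n (x + t)|‖ ≤ 16 * (2 : ℝ) ^ (α * l) * 2 ^ k / (n : ℝ) ^ α := by
    intro t ht
    have hxt : ∀ i ≤ l, (x + t) i = eG k i + eG l i := fun i hi => by
      simp [hx i (by omega), ht i (by omega)]
    have hy : x + t ∈ dyadicI (k + 1) (eG k) := fun i hi => by
      simp [hxt i (by omega), eG, show i ≠ l by omega]
    have hyl : (x + t) l = 1 := by simp [hxt l le_rfl, eG, hkl.ne']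
    rw [Real.norm_eq_abs, abs_abs]
    exact abs_cesKernel_le hα0.le hα1.le hkl
      ((Nat.pow_lt_pow_right one_lt_two hlM).trans hn).le hy hyl
  have hμ : μG.real (dyadicI M 0) = (2 ^ M)⁻¹ := by simp [measureReal_def, μG_dyadicI_zero]
  calc _ ≤ _ := Real.le_norm_self _
    _ ≤ _ := norm_setIntegral_le_of_norm_le_const
        (by rw [μG_dyadicI_zero]; exact ENNReal.inv_lt_top.2 (by positivity)) hbound
    _ = _ := by rw [hμ]; field_simp

end
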